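/- arXiv:2012.00615 — 7 statements merged into one kernel-verified Lean document; each statement's English description precedes it below -/
import Mathlib

section
/- Let X, Y be Banach spaces and u : [0,∞) → L(X;Y). If for every x ∈ X there exists t_x ≥ 0 such that u(t)x = 0 for all t > t_x, then there exists t₀ ≥ 0 such that u(t) = 0 for all t > t₀. -/
/-! The vectors killed by every `u t` with `t > n` form a closed subspace `eventualKer u n`,
and the hypothesis says that these countably many subspaces cover `X`. By Baire's theorem one
of them has nonempty interior, and a subspace with nonempty interior is the whole space,
so `u t = 0` for all `t > n`. -/

open Set Filter Topology

theorem Submodule.exists_eq_top_of_iUnion_eq_univ {R M ι : Type*} [Ring R] [TopologicalSpace R]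
    [TopologicalSpace M] [AddCommGroup M] [ContinuousAdd M] [Module R M] [ContinuousSMul R M]
    [NeBot (𝓝[{ x : R | IsUnit x }] 0)] [BaireSpace M] [Countable ι] {S : ι → Submodule R M}
    (hS : ∀ i, IsClosed (S i : Set M)) (hcover : ⋃ i, (S i : Set M) = univ) :
    ∃ i, S i = ⊤ :=
  (nonempty_interior_of_iUnion_of_closed hS hcover).imp fun i hi =>
    (S i).eq_top_of_nonempty_interior' hi

section EventualKer

variable {R M N ι : Type*} [Semiring R] [TopologicalSpace M] [AddCommMonoid M] [Module R M]
  [TopologicalSpace N] [AddCommMonoid N] [Module R N]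

def eventualKer [Preorder ι] (u : ι → M →L[R] N) (s : ι) : Submodule R M :=
  ⨅ (t) (_ : s < t), LinearMap.ker (u t : M →ₗ[R] N)

theorem mem_eventualKer [Preorder ι] {u : ι → M →L[R] N} {s : ι} {x : M} :
    x ∈ eventualKer u s ↔ ∀ t, s < t → u t x = 0 := by
  simp [eventualKer]

theorem eventualKer_eq_top_iff [Preorder ι] {u : ι → M →L[R] N} {s : ι} :
    eventualKer u s = ⊤ ↔ ∀ t, s < t → u t = 0 := by
  simp only [Submodule.eq_top_iff', mem_eventualKer, ContinuousLinearMap.ext_iff,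
    zero_apply]
  exact forall_comm.trans (forall_congr' fun _ => forall_comm)

theorem isClosed_eventualKer [Preorder ι] [T1Space N] (u : ι → M →L[R] N) (s : ι) :
    IsClosed (eventualKer u s : Set M) := by
  simp only [eventualKer, Submodule.coe_iInf]
  exact isClosed_biInter fun t _ => (u t).isClosed_ker

theorem iUnion_eventualKer_natCast_eq_univ {u : ℝ → M →L[R] N}
    (h : ∀ x, ∃ tx, ∀ t, tx < t → u t x = 0) :
    ⋃ n : ℕ, (eventualKer u n : Set M) = univ := by
  refine eq_univ_of_forall fun x => mem_iUnion.2 ?_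
  obtain ⟨tx, htx⟩ := h x
  obtain ⟨n, hn⟩ := exists_nat_ge tx
  exact ⟨n, mem_eventualKer.2 fun t ht => htx t (hn.trans_lt ht)⟩

end EventualKer

theorem eventually_zero_individual_iff_uniform_general
    {X Y : Type*} [NormedAddCommGroup X] [NormedSpace ℝ X] [CompleteSpace X]
    [NormedAddCommGroup Y] [NormedSpace ℝ Y]
    (u : ℝ → X →L[ℝ] Y)
    (h : ∀ x : X, ∃ tx : ℝ, 0 ≤ tx ∧ ∀ t : ℝ, tx < t → u t x = 0) :
    ∃ t₀ : ℝ, 0 ≤ t₀ ∧ ∀ t : ℝ, t₀ < t → u t = 0 := by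
  obtain ⟨n, hn⟩ := Submodule.exists_eq_top_of_iUnion_eq_univ
    (fun n : ℕ => isClosed_eventualKer u n)
    (iUnion_eventualKer_natCast_eq_univ fun x => (h x).imp fun _ => And.right)
  exact ⟨n, n.cast_nonneg, eventualKer_eq_top_iff.1 hn⟩

/-- Individually eventually zero implies uniformly eventually zero. -/
theorem eventually_zero_individual_iff_uniform
    {X Y : Type*} [NormedAddCommGroup X] [NormedSpace ℝ X] [CompleteSpace X]
    [NormedAddCommGroup Y] [NormedSpace ℝ Y] [CompleteSpace Y]
    (u : ℝ → X →L[ℝ] Y)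
    (h : ∀ x : X, ∃ tx : ℝ, 0 ≤ tx ∧ ∀ t : ℝ, tx < t → u t x = 0) :
    ∃ t₀ : ℝ, 0 ≤ t₀ ∧ ∀ t : ℝ, t₀ < t → u t = 0 :=
  eventually_zero_individual_iff_uniform_general u h
end

section
/- Let X, Y be Banach spaces and u : [0,∞) → L(X;Y). If for every x ∈ X there is t_x ≥ 0 such that the orbit t ↦ u(t)x is bounded on (t_x, ∞), then there exists t₀ ≥ 0 such that for every x ∈ X the orbit t ↦ u(t)x is bounded on (t₀, ∞). -/
/-- Individually eventually bounded implies uniformly eventually bounded. -/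
theorem eventually_bounded_individual_implies_uniform
    {X Y : Type*} [NormedAddCommGroup X] [NormedSpace ℝ X] [CompleteSpace X]
    [NormedAddCommGroup Y] [NormedSpace ℝ Y] [CompleteSpace Y]
    (u : ℝ → X →L[ℝ] Y)
    (h : ∀ x : X, ∃ tx : ℝ, 0 ≤ tx ∧ ∃ C : ℝ, ∀ t : ℝ, tx < t → ‖u t x‖ ≤ C) :
    ∃ t₀ : ℝ, 0 ≤ t₀ ∧ ∀ x : X, ∃ C : ℝ, ∀ t : ℝ, t₀ < t → ‖u t x‖ ≤ C := by
  set E : ℕ → Set X := fun n => {x | ∀ t : ℝ, (n : ℝ) < t → ‖u t x‖ ≤ n} with hE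
  have hclosed : ∀ n, IsClosed (E n) := by
    intro n
    have : E n = ⋂ t ∈ {t : ℝ | (n : ℝ) < t}, {x : X | ‖u t x‖ ≤ n} := by
      ext x; simp [hE, Set.mem_iInter]
    rw [this]
    exact isClosed_biInter fun t _ =>
      isClosed_le ((u t).continuous.norm) continuous_const
  have hcover : ⋃ n, E n = Set.univ := by
    apply Set.eq_univ_of_forall
    intro x
    obtain ⟨tx, htx, C, hC⟩ := h x
    obtain ⟨n, hn⟩ := exists_nat_ge (max tx C)
    refine Set.mem_iUnion.2 ⟨n, fun t ht => ?_⟩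
    have h1 : tx < t := lt_of_le_of_lt (le_trans (le_max_left _ _) hn) ht
    exact le_trans (hC t h1) (le_trans (le_max_right tx C) hn)
  obtain ⟨n, x₀, hx₀⟩ := nonempty_interior_of_iUnion_of_closed hclosed hcover
  obtain ⟨r, hr, hball⟩ := Metric.isOpen_iff.1 isOpen_interior x₀ hx₀
  have hballE : Metric.ball x₀ r ⊆ E n := hball.trans interior_subset
  have hx₀E : x₀ ∈ E n := hballE (Metric.mem_ball_self hr)
  refine ⟨n, Nat.cast_nonneg n, fun x => ?_⟩
  rcases eq_or_ne x 0 with rfl | hx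
  · exact ⟨0, fun t _ => by simp⟩
  · have hxn : 0 < ‖x‖ := norm_pos_iff.2 hx
    set s : ℝ := r / (2 * ‖x‖) with hs
    have hspos : 0 < s := div_pos hr (by positivity)
    have hmem : x₀ + s • x ∈ E n := by
      apply hballE
      rw [Metric.mem_ball, dist_eq_norm]
      have h1 : x₀ + s • x - x₀ = s • x := by abel
      have h2 : s * ‖x‖ = r / 2 := by
        rw [hs]; field_simp
      rw [h1, norm_smul, Real.norm_eq_abs, abs_of_pos hspos, h2]
      linarith
    refine ⟨(2 * n) / s, fun t ht => ?_⟩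
    have key : ‖u t (x₀ + s • x) - u t x₀‖ ≤ 2 * n := by
      calc ‖u t (x₀ + s • x) - u t x₀‖ ≤ ‖u t (x₀ + s • x)‖ + ‖u t x₀‖ := norm_sub_le _ _
        _ ≤ n + n := add_le_add (hmem t ht) (hx₀E t ht)
        _ = 2 * n := by ring
    have heq : u t x = s⁻¹ • (u t (x₀ + s • x) - u t x₀) := by
      rw [map_add, map_smul]
      rw [add_sub_cancel_left, smul_smul, inv_mul_cancel₀ (ne_of_gt hspos), one_smul]
    rw [heq, norm_smul, Real.norm_eq_abs, abs_of_pos (inv_pos.2 hspos)]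
    rw [div_eq_inv_mul]
    exact mul_le_mul_of_nonneg_left key (le_of_lt (inv_pos.2 hspos))
end

section
/- Let X, Y be Banach spaces, 0 < α ≤ 1, and u : [0,∞) → L(X;Y). If for every x ∈ X there is t_x ≥ 0 such that the orbit t ↦ u(t)x is α-Hölder continuous on (t_x,∞), then there exists a uniform t₀ ≥ 0 such that every orbit is α-Hölder continuous on (t₀,∞). -/
/-- Individually eventually α-Hölder continuous implies uniformly eventually
α-Hölder continuous. -/
theorem eventually_holder_individual_implies_uniform
    {X Y : Type*} [NormedAddCommGroup X] [NormedSpace ℝ X] [CompleteSpace X]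
    [NormedAddCommGroup Y] [NormedSpace ℝ Y] [CompleteSpace Y]
    (α : ℝ) (hα0 : 0 < α) (hα1 : α ≤ 1)
    (u : ℝ → X →L[ℝ] Y)
    (h : ∀ x : X, ∃ tx : ℝ, 0 ≤ tx ∧ ∃ C : ℝ,
      ∀ r s : ℝ, tx < r → r < s → ‖u s x - u r x‖ ≤ C * (s - r) ^ α) :
    ∃ t₀ : ℝ, 0 ≤ t₀ ∧ ∀ x : X, ∃ C : ℝ,
      ∀ r s : ℝ, t₀ < r → r < s → ‖u s x - u r x‖ ≤ C * (s - r) ^ α := by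
  set E : ℕ → Set X := fun n =>
    {x | ∀ r s : ℝ, (n : ℝ) < r → r < s → ‖u s x - u r x‖ ≤ (n : ℝ) * (s - r) ^ α} with hE
  have hclosed : ∀ n, IsClosed (E n) := by
    intro n
    have : E n = ⋂ (r : ℝ) (s : ℝ) (_ : (n : ℝ) < r) (_ : r < s),
        {x | ‖u s x - u r x‖ ≤ (n : ℝ) * (s - r) ^ α} := by
      ext x; simp [hE, Set.mem_iInter]
    rw [this]
    refine isClosed_iInter fun r => isClosed_iInter fun s =>
      isClosed_iInter fun _ => isClosed_iInter fun _ => ?_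
    exact isClosed_le (((u s).continuous.sub (u r).continuous).norm) continuous_const
  have hcover : (⋃ n, E n) = Set.univ := by
    ext x
    simp only [Set.mem_iUnion, Set.mem_univ, iff_true]
    obtain ⟨tx, htx, C, hC⟩ := h x
    obtain ⟨n, hn⟩ := exists_nat_ge (max tx C)
    refine ⟨n, fun r s hr hrs => ?_⟩
    have htxr : tx < r := lt_of_le_of_lt (le_trans (le_max_left _ _) hn) hr
    refine le_trans (hC r s htxr hrs) ?_
    have hCn : C ≤ (n : ℝ) := le_trans (le_max_right _ _) hn
    have hpow : (0 : ℝ) ≤ (s - r) ^ α := Real.rpow_nonneg (by linarith) α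
    exact mul_le_mul_of_nonneg_right hCn hpow
  obtain ⟨n, hn⟩ := nonempty_interior_of_iUnion_of_closed hclosed hcover
  obtain ⟨x₀, hx₀⟩ := hn
  obtain ⟨ε, hε, hball⟩ := Metric.mem_nhds_iff.mp (mem_interior_iff_mem_nhds.mp hx₀)
  have hεE : ∀ y : X, ‖y‖ < ε → x₀ + y ∈ E n := by
    intro y hy
    apply hball
    simp [Metric.mem_ball, dist_eq_norm, hy]
  have hx₀E : x₀ ∈ E n := by
    simpa using hεE 0 (by simpa using hε)
  refine ⟨n, Nat.cast_nonneg n, fun x => ?_⟩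
  by_cases hx : x = 0
  · exact ⟨0, fun r s hr hrs => by
      simp [hx, le_of_eq, Real.rpow_nonneg]⟩
  · have hxn : 0 < ‖x‖ := norm_pos_iff.mpr hx
    set c : ℝ := ε / (2 * ‖x‖) with hc
    have hcpos : 0 < c := div_pos hε (by positivity)
    have hyn : ‖c • x‖ < ε := by
      rw [norm_smul, Real.norm_of_nonneg hcpos.le, hc]
      rw [div_mul_eq_mul_div, mul_comm]
      have : ‖x‖ * ε / (2 * ‖x‖) = ε / 2 := by field_simp
      rw [this]; linarith
    have hyE : x₀ + c • x ∈ E n := hεE _ hyn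
    refine ⟨c⁻¹ * (2 * n), fun r s hr hrs => ?_⟩
    have key : ‖u s (c • x) - u r (c • x)‖ ≤ 2 * n * (s - r) ^ α := by
      have h1 := hyE r s hr hrs
      have h2 := hx₀E r s hr hrs
      have heq : u s (c • x) - u r (c • x)
          = (u s (x₀ + c • x) - u r (x₀ + c • x)) - (u s x₀ - u r x₀) := by
        simp only [map_add]; abel
      calc ‖u s (c • x) - u r (c • x)‖
          ≤ ‖u s (x₀ + c • x) - u r (x₀ + c • x)‖ + ‖u s x₀ - u r x₀‖ := by
            rw [heq]; exact norm_sub_le _ _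
        _ ≤ (n : ℝ) * (s - r) ^ α + (n : ℝ) * (s - r) ^ α := add_le_add h1 h2
        _ = 2 * n * (s - r) ^ α := by ring
    have hxy : u s x - u r x = c⁻¹ • (u s (c • x) - u r (c • x)) := by
      simp [map_smul, smul_sub, smul_smul, inv_mul_cancel₀ hcpos.ne']
    rw [hxy, norm_smul, Real.norm_of_nonneg (inv_nonneg.mpr hcpos.le), mul_assoc]
    exact mul_le_mul_of_nonneg_left key (inv_nonneg.mpr hcpos.le)
end

section
/- Let X, Y be Banach spaces and u : [0,∞) → L(X;Y). If for every x ∈ X there exists t_x ≥ 0 such that the orbit t ↦ u(t)x is continuous on (t_x, ∞), then there exists a single t₀ ≥ 0 such that every orbit t ↦ u(t)x is continuous on (t₀, ∞). -/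
open Set Metric

/-- A set whose closure has empty interior is meagre. -/
lemma isMeagre_of_interior_closure_empty {Z : Type*} [TopologicalSpace Z] {s : Set Z}
    (h : interior (closure s) = ∅) : IsMeagre s := by
  have hd : Dense (closure s)ᶜ := interior_eq_empty_iff_dense_compl.mp h
  have hmem : (closure s)ᶜ ∈ residual Z :=
    residual_of_dense_open (isClosed_closure.isOpen_compl) hd
  exact Filter.mem_of_superset hmem (compl_subset_compl.mpr subset_closure)

/-- Individually eventually continuous implies uniformly eventually continuous. -/
theorem eventually_continuous_individual_implies_uniform
    {X Y : Type*} [NormedAddCommGroup X] [NormedSpace ℝ X] [CompleteSpace X]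
    [NormedAddCommGroup Y] [NormedSpace ℝ Y] [CompleteSpace Y]
    (u : ℝ → X →L[ℝ] Y)
    (h : ∀ x : X, ∃ tx : ℝ, 0 ≤ tx ∧
      ContinuousOn (fun t : ℝ => u t x) (Set.Ioi tx)) :
    ∃ t₀ : ℝ, 0 ≤ t₀ ∧ ∀ x : X,
      ContinuousOn (fun t : ℝ => u t x) (Set.Ioi t₀) := by
  classical
  set E : ℕ → Set X :=
    fun n => {x : X | ContinuousOn (fun t : ℝ => u t x) (Set.Ioi (n : ℝ))} with hE
  -- The union of the E n is everything
  have hEunion : (⋃ n, E n) = Set.univ := by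
    ext x
    simp only [Set.mem_iUnion, Set.mem_univ, iff_true]
    obtain ⟨tx, _, hc⟩ := h x
    obtain ⟨n, hn⟩ := exists_nat_ge tx
    exact ⟨n, hc.mono fun t ht => lt_of_le_of_lt hn ht⟩
  -- Some E N is nonmeagre
  obtain ⟨N, hNmeag⟩ : ∃ N, ¬ IsMeagre (E N) := by
    by_contra hcon
    push_neg at hcon
    have hm : IsMeagre (⋃ n, E n) := isMeagre_iUnion hcon
    rw [hEunion] at hm
    have hd : Dense ((Set.univ : Set X)ᶜ) := dense_of_mem_residual hm
    rw [Set.compl_univ] at hd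
    exact Set.not_nonempty_empty hd.nonempty
  -- E N is a submodule
  have hzero : (0 : X) ∈ E N := by
    have : (fun t : ℝ => u t (0 : X)) = fun _ => (0 : Y) := funext fun t => map_zero (u t)
    simp only [hE, Set.mem_setOf_eq, this]
    exact continuousOn_const
  have hadd : ∀ a b : X, a ∈ E N → b ∈ E N → a + b ∈ E N := by
    intro a b ha hb
    have : (fun t : ℝ => u t (a + b)) = fun t : ℝ => u t a + u t b :=
      funext fun t => map_add (u t) a b
    simp only [hE, Set.mem_setOf_eq, this]
    exact ha.add hb
  have hsmul : ∀ (c : ℝ) (a : X), a ∈ E N → c • a ∈ E N := by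
    intro c a ha
    have : (fun t : ℝ => u t (c • a)) = fun t : ℝ => c • u t a :=
      funext fun t => map_smul (u t) c a
    simp only [hE, Set.mem_setOf_eq, this]
    exact ha.const_smul c
  let S : Submodule ℝ X :=
    { carrier := E N
      zero_mem' := hzero
      add_mem' := fun {a b} ha hb => hadd a b ha hb
      smul_mem' := fun c a ha => hsmul c a ha }
  -- E N is dense
  have hSdense : Dense (E N) := by
    have hint : (interior (closure (E N))).Nonempty := by
      by_contra hcon
      rw [Set.not_nonempty_iff_eq_empty] at hcon
      exact hNmeag (isMeagre_of_interior_closure_empty hcon)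
    have hclS : closure (E N) = (S.topologicalClosure : Set X) := rfl
    have htop : S.topologicalClosure = ⊤ := by
      apply Submodule.eq_top_of_nonempty_interior'
      rw [Submodule.topologicalClosure_coe]
      exact hint
    rw [dense_iff_closure_eq, hclS, htop]
    rfl
  -- local uniform bounds on operator norms
  have hbound : ∀ a b : ℝ, (N : ℝ) < a →
      ∃ M : ℝ, 0 ≤ M ∧ ∀ t ∈ Set.Icc a b, ‖u t‖ ≤ M := by
    intro a b ha
    set A : ℕ → Set X := fun m => {x | ∀ t ∈ Set.Icc a b, ‖u t x‖ ≤ (m : ℝ)} with hA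
    have hAclosed : ∀ m, IsClosed (A m) := by
      intro m
      have : A m = ⋂ t ∈ Set.Icc a b, {x | ‖u t x‖ ≤ (m : ℝ)} := by
        ext x; simp [hA]
      rw [this]
      exact isClosed_biInter fun t _ =>
        isClosed_le ((u t).continuous.norm) continuous_const
    have hsub : E N ⊆ ⋃ m, A m := by
      intro x hx
      have hIcc : Set.Icc a b ⊆ Set.Ioi (N : ℝ) := fun t ht => lt_of_lt_of_le ha ht.1
      have hcont : ContinuousOn (fun t : ℝ => u t x) (Set.Icc a b) := hx.mono hIcc
      obtain ⟨C, hC⟩ := isCompact_Icc.exists_bound_of_continuousOn hcont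
      obtain ⟨m, hm⟩ := exists_nat_ge C
      exact Set.mem_iUnion.mpr ⟨m, fun t ht => (hC t ht).trans hm⟩
    obtain ⟨m, hmint⟩ : ∃ m, (interior (A m)).Nonempty := by
      by_contra hcon
      rw [not_exists] at hcon
      have hcon' : ∀ m, interior (A m) = ∅ :=
        fun m => Set.not_nonempty_iff_eq_empty.mp (hcon m)
      have : IsMeagre (⋃ m, A m) := by
        refine isMeagre_iUnion fun m => isMeagre_of_interior_closure_empty ?_
        rw [(hAclosed m).closure_eq]; exact hcon' m
      exact hNmeag (this.mono hsub)
    obtain ⟨x₀, hx₀⟩ := hmint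
    obtain ⟨r, hr, hball⟩ := Metric.mem_nhds_iff.mp (mem_interior_iff_mem_nhds.mp hx₀)
    have hx₀A : x₀ ∈ A m := hball (Metric.mem_ball_self hr)
    refine ⟨4 * m / r, by positivity, fun t ht => ?_⟩
    have hbnd : ∀ y : X, ‖y‖ < r → ‖u t y‖ ≤ 2 * m := by
      intro y hy
      have hmem : x₀ + y ∈ A m := by
        apply hball
        simp only [Metric.mem_ball, dist_eq_norm, add_sub_cancel_left]
        exact hy
      have h1 : ‖u t (x₀ + y)‖ ≤ (m : ℝ) := hmem t ht
      have h2 : ‖u t x₀‖ ≤ (m : ℝ) := hx₀A t ht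
      have : u t y = u t (x₀ + y) - u t x₀ := by
        rw [map_add]; abel
      rw [this]
      calc ‖u t (x₀ + y) - u t x₀‖ ≤ ‖u t (x₀ + y)‖ + ‖u t x₀‖ := norm_sub_le _ _
        _ ≤ 2 * m := by linarith
    refine ContinuousLinearMap.opNorm_le_of_shell (f := u t) (ε := r) (c := (2 : ℝ))
      hr (by positivity) (by norm_num) ?_
    intro y hy1 hy2
    have h1 : r / 2 ≤ ‖y‖ := by simpa using hy1
    have hy0 : (0 : ℝ) < ‖y‖ := lt_of_lt_of_le (by positivity) h1
    have := hbnd y hy2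
    have hkey : 2 * (m : ℝ) ≤ 4 * m / r * ‖y‖ := by
      rw [div_mul_eq_mul_div, le_div_iff₀ hr]
      nlinarith [Nat.cast_nonneg (α := ℝ) m]
    linarith
  -- conclusion
  refine ⟨(N : ℝ), Nat.cast_nonneg N, fun x => ?_⟩
  intro t ht
  have htN : (N : ℝ) < t := ht
  set a : ℝ := ((N : ℝ) + t) / 2 with ha
  have haN : (N : ℝ) < a := by rw [ha]; linarith
  have hat : a < t := by rw [ha]; linarith
  obtain ⟨M, hM0, hM⟩ := hbound a (t + 1) haN
  rw [Metric.continuousWithinAt_iff]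
  intro ε hε
  set η : ℝ := ε / (3 * (M + 1)) with hη
  have hη0 : 0 < η := by positivity
  -- approximate x by x' ∈ E N
  have hxcl : x ∈ closure (E N) := hSdense x
  obtain ⟨x', hx'E, hx'⟩ := Metric.mem_closure_iff.mp hxcl η hη0
  -- continuity of orbit of x' at t
  have hcx' : ContinuousWithinAt (fun s : ℝ => u s x') (Set.Ioi (N : ℝ)) t := hx'E t ht
  rw [Metric.continuousWithinAt_iff] at hcx'
  obtain ⟨δ₁, hδ₁, hδ₁p⟩ := hcx' (ε / 3) (by positivity)
  refine ⟨min δ₁ (min (t - a) 1), lt_min hδ₁ (lt_min (by linarith) one_pos), fun {s} hs hds => ?_⟩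
  have hds1 : dist s t < δ₁ := lt_of_lt_of_le hds (min_le_left _ _)
  have hds2 : dist s t < t - a :=
    lt_of_lt_of_le hds ((min_le_right _ _).trans (min_le_left _ _))
  have hds3 : dist s t < 1 :=
    lt_of_lt_of_le hds ((min_le_right _ _).trans (min_le_right _ _))
  have hsIcc : s ∈ Set.Icc a (t + 1) := by
    rw [Real.dist_eq, abs_lt] at hds2 hds3
    constructor <;> linarith [hds2.1, hds3.2]
  have htIcc : t ∈ Set.Icc a (t + 1) := ⟨le_of_lt hat, by linarith⟩
  have hMs : ‖u s‖ ≤ M := hM s hsIcc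
  have hMt : ‖u t‖ ≤ M := hM t htIcc
  have hxx' : ‖x - x'‖ < η := by rwa [← dist_eq_norm]
  have hmid : dist (u s x') (u t x') < ε / 3 := hδ₁p hs hds1
  have h1 : ‖u s x - u s x'‖ ≤ M * η := by
    calc ‖u s x - u s x'‖ = ‖u s (x - x')‖ := by rw [map_sub]
      _ ≤ ‖u s‖ * ‖x - x'‖ := (u s).le_opNorm _
      _ ≤ M * η := by
          apply mul_le_mul hMs (le_of_lt hxx') (norm_nonneg _) hM0
  have h2 : ‖u t x' - u t x‖ ≤ M * η := by
    calc ‖u t x' - u t x‖ = ‖u t (x - x')‖ := by rw [map_sub, norm_sub_rev]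
      _ ≤ ‖u t‖ * ‖x - x'‖ := (u t).le_opNorm _
      _ ≤ M * η := by
          apply mul_le_mul hMt (le_of_lt hxx') (norm_nonneg _) hM0
  have hMη : M * η ≤ ε / 3 := by
    rw [hη]
    rw [mul_div_assoc', div_le_div_iff₀ (by positivity) (by norm_num)]
    nlinarith
  calc dist (u s x) (u t x)
      ≤ dist (u s x) (u s x') + dist (u s x') (u t x') + dist (u t x') (u t x) :=
        dist_triangle4 _ _ _ _
    _ < ε / 3 + ε / 3 + ε / 3 := by
        rw [dist_eq_norm, dist_eq_norm (u t x')]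
        exact add_lt_add_of_lt_of_le (add_lt_add_of_le_of_lt (h1.trans hMη) hmid)
          (h2.trans hMη)
    _ = ε := by ring
end

section
/- Let X, Y be Banach spaces and u : [0,∞) → L(X;Y). If for every x ∈ X there exists t_x ≥ 0 such that the orbit t ↦ u(t)x is uniformly continuous on (t_x, ∞), then there exists t₀ ≥ 0 such that every orbit is uniformly continuous on (t₀, ∞). -/
open Set

/-- Individually eventually uniformly continuous implies uniformly eventually
uniformly continuous. -/
theorem eventually_uniformly_continuous_individual_implies_uniform
    {X Y : Type*} [NormedAddCommGroup X] [NormedSpace ℝ X] [CompleteSpace X]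
    [NormedAddCommGroup Y] [NormedSpace ℝ Y] [CompleteSpace Y]
    (u : ℝ → X →L[ℝ] Y)
    (h : ∀ x : X, ∃ tx : ℝ, 0 ≤ tx ∧
      ∀ ε > (0:ℝ), ∃ δ > (0:ℝ), ∀ s t : ℝ, tx < s → tx < t → |t - s| < δ →
        ‖u t x - u s x‖ < ε) :
    ∃ t₀ : ℝ, 0 ≤ t₀ ∧ ∀ x : X,
      ∀ ε > (0:ℝ), ∃ δ > (0:ℝ), ∀ s t : ℝ, t₀ < s → t₀ < t → |t - s| < δ →
        ‖u t x - u s x‖ < ε := by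
  classical
  -- Step 1: Baire category to get a uniform quantitative bound.
  set E : ℕ × ℕ → Set X := fun p =>
    {x | ∀ s t : ℝ, (p.2 : ℝ) < s → (p.2 : ℝ) < t → |t - s| ≤ 1 / (p.1 + 1) →
      ‖u t x - u s x‖ ≤ 1} with hE
  have hEclosed : ∀ p, IsClosed (E p) := by
    intro p
    have : E p = ⋂ (s : ℝ) (t : ℝ) (_ : (p.2 : ℝ) < s) (_ : (p.2 : ℝ) < t)
        (_ : |t - s| ≤ 1 / (p.1 + 1)), {x : X | ‖u t x - u s x‖ ≤ 1} := by
      ext x; simp [hE, Set.mem_iInter]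
    rw [this]
    refine isClosed_iInter fun s => isClosed_iInter fun t => isClosed_iInter fun _ =>
      isClosed_iInter fun _ => isClosed_iInter fun _ => ?_
    exact isClosed_le (Continuous.norm (((u t).continuous).sub ((u s).continuous)))
      continuous_const
  have hEcover : (⋃ p, E p) = univ := by
    ext x
    simp only [mem_iUnion, mem_univ, iff_true]
    obtain ⟨tx, htx0, htx⟩ := h x
    obtain ⟨δ, hδ, hδ'⟩ := htx 1 one_pos
    obtain ⟨m, hm⟩ := exists_nat_one_div_lt hδ
    obtain ⟨n, hn⟩ := exists_nat_gt tx
    exact ⟨⟨m, n⟩, fun s t hs ht hst =>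
      (hδ' s t (hn.trans hs) (hn.trans ht) (lt_of_le_of_lt hst hm)).le⟩
  obtain ⟨⟨m, n⟩, x₀, hx₀⟩ := nonempty_interior_of_iUnion_of_closed hEclosed hEcover
  rw [mem_interior_iff_mem_nhds, Metric.mem_nhds_iff] at hx₀
  obtain ⟨r, hr, hball⟩ := hx₀
  have hx₀E : x₀ ∈ E (m, n) := hball (Metric.mem_ball_self hr)
  -- The uniform quantitative bound.
  have key : ∀ (y : X) (s t : ℝ), (n : ℝ) < s → (n : ℝ) < t → |t - s| ≤ 1 / (m + 1) →
      ‖u t y - u s y‖ ≤ 4 / r * ‖y‖ := by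
    intro y s t hs ht hst
    rcases eq_or_ne y 0 with rfl | hy
    · simp
    · have hny : 0 < ‖y‖ := norm_pos_iff.mpr hy
      set z : X := (r / (2 * ‖y‖)) • y with hz
      have hnz : ‖z‖ = r / 2 := by
        rw [hz, norm_smul, Real.norm_eq_abs, abs_of_pos (by positivity)]
        field_simp
      have hzball : x₀ + z ∈ Metric.ball x₀ r := by
        rw [Metric.mem_ball, dist_eq_norm]
        simp [hnz]
        linarith
      have hzE : x₀ + z ∈ E (m, n) := hball hzball
      have hz2 : ‖u t z - u s z‖ ≤ 2 := by
        have h1 := hzE s t hs ht hst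
        have h2 := hx₀E s t hs ht hst
        have : u t z - u s z = (u t (x₀ + z) - u s (x₀ + z)) - (u t x₀ - u s x₀) := by
          simp only [map_add]; abel
        rw [this]
        calc ‖(u t (x₀ + z) - u s (x₀ + z)) - (u t x₀ - u s x₀)‖
            ≤ ‖u t (x₀ + z) - u s (x₀ + z)‖ + ‖u t x₀ - u s x₀‖ := norm_sub_le _ _
          _ ≤ 2 := by linarith
      have hyz : y = (2 * ‖y‖ / r) • z := by
        rw [hz, smul_smul]
        rw [show (2 * ‖y‖ / r) * (r / (2 * ‖y‖)) = 1 by field_simp]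
        simp
      have hstep : u t y - u s y = (2 * ‖y‖ / r) • (u t z - u s z) := by
        conv_lhs => rw [hyz]
        simp [map_smul, smul_sub]
      calc ‖u t y - u s y‖ = ‖(2 * ‖y‖ / r) • (u t z - u s z)‖ := by rw [hstep]
        _ = (2 * ‖y‖ / r) * ‖u t z - u s z‖ := by
            rw [norm_smul, Real.norm_eq_abs, abs_of_pos (by positivity)]
        _ ≤ (2 * ‖y‖ / r) * 2 := by
            apply mul_le_mul_of_nonneg_left hz2 (by positivity)
        _ = 4 / r * ‖y‖ := by ring
  -- Step 2: the subspaces of vectors uniformly continuous past `n + k`.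
  set V : ℕ → Set X := fun k =>
    {x | ∀ ε > (0:ℝ), ∃ δ > (0:ℝ), ∀ s t : ℝ, ((n : ℝ) + k) < s → ((n : ℝ) + k) < t →
      |t - s| < δ → ‖u t x - u s x‖ < ε} with hV
  have hnk : ∀ k : ℕ, (n : ℝ) ≤ (n : ℝ) + k := fun k => le_add_of_nonneg_right (by positivity)
  have hVclosed : ∀ k, IsClosed (V k) := by
    intro k
    refine isClosed_of_closure_subset fun x hx => ?_
    rw [Metric.mem_closure_iff] at hx
    rename' hx => hx'
    intro ε hε
    obtain ⟨y, hyV, hyd⟩ := hx' (ε * r / 8) (by positivity)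
    obtain ⟨δ, hδ, hδ'⟩ := hyV (ε / 2) (by positivity)
    refine ⟨min δ (1 / (m + 1)), lt_min hδ (by positivity), fun s t hs ht hst => ?_⟩
    have hs' : (n : ℝ) < s := lt_of_le_of_lt (hnk k) hs
    have ht' : (n : ℝ) < t := lt_of_le_of_lt (hnk k) ht
    have h1 : ‖u t (x - y) - u s (x - y)‖ ≤ 4 / r * ‖x - y‖ :=
      key (x - y) s t hs' ht' (le_of_lt (lt_of_lt_of_le hst (min_le_right _ _)))
    have h2 : ‖u t y - u s y‖ < ε / 2 :=
      hδ' s t hs ht (lt_of_lt_of_le hst (min_le_left _ _))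
    have hxy : ‖x - y‖ < ε * r / 8 := by rwa [← dist_eq_norm]
    have h3 : 4 / r * ‖x - y‖ < ε / 2 := by
      have : 4 / r * ‖x - y‖ < 4 / r * (ε * r / 8) :=
        mul_lt_mul_of_pos_left hxy (by positivity)
      calc 4 / r * ‖x - y‖ < 4 / r * (ε * r / 8) := this
        _ = ε / 2 := by field_simp; ring
    have heq : u t x - u s x = (u t (x - y) - u s (x - y)) + (u t y - u s y) := by
      simp only [map_sub]; abel
    calc ‖u t x - u s x‖ ≤ ‖u t (x - y) - u s (x - y)‖ + ‖u t y - u s y‖ := by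
          rw [heq]; exact norm_add_le _ _
      _ < ε / 2 + ε / 2 := by linarith
      _ = ε := by ring
  have hVcover : (⋃ k, V k) = univ := by
    ext x
    simp only [mem_iUnion, mem_univ, iff_true]
    obtain ⟨tx, htx0, htx⟩ := h x
    obtain ⟨k, hk⟩ := exists_nat_gt tx
    refine ⟨k, fun ε hε => ?_⟩
    obtain ⟨δ, hδ, hδ'⟩ := htx ε hε
    refine ⟨δ, hδ, fun s t hs ht hst => ?_⟩
    have hkn : (k : ℝ) ≤ (n : ℝ) + k := le_add_of_nonneg_left (by positivity)
    have hks : tx < s := lt_of_lt_of_le hk (hkn.trans hs.le)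
    have hkt : tx < t := lt_of_lt_of_le hk (hkn.trans ht.le)
    exact hδ' s t hks hkt hst
  obtain ⟨k, x₁, hx₁⟩ := nonempty_interior_of_iUnion_of_closed hVclosed hVcover
  rw [mem_interior_iff_mem_nhds, Metric.mem_nhds_iff] at hx₁
  obtain ⟨r₁, hr₁, hball₁⟩ := hx₁
  have hx₁V : x₁ ∈ V k := hball₁ (Metric.mem_ball_self hr₁)
  -- V k is all of X.
  refine ⟨(n : ℝ) + k, by positivity, fun y => ?_⟩
  rcases eq_or_ne y 0 with rfl | hy
  · intro ε hε
    exact ⟨1, one_pos, fun s t _ _ _ => by simpa using hε⟩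
  · have hny : 0 < ‖y‖ := norm_pos_iff.mpr hy
    set c : ℝ := r₁ / (2 * ‖y‖) with hc
    have hcpos : 0 < c := by positivity
    have hw : x₁ + c • y ∈ Metric.ball x₁ r₁ := by
      rw [Metric.mem_ball, dist_eq_norm]
      have : ‖x₁ + c • y - x₁‖ = c * ‖y‖ := by
        rw [add_sub_cancel_left, norm_smul, Real.norm_eq_abs, abs_of_pos hcpos]
      rw [this, hc]
      rw [show r₁ / (2 * ‖y‖) * ‖y‖ = r₁ / 2 by field_simp]
      linarith
    have hwV : x₁ + c • y ∈ V k := hball₁ hw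
    intro ε hε
    obtain ⟨δ₁, hδ₁, hδ₁'⟩ := hwV (ε * c / 2) (by positivity)
    obtain ⟨δ₂, hδ₂, hδ₂'⟩ := hx₁V (ε * c / 2) (by positivity)
    refine ⟨min δ₁ δ₂, lt_min hδ₁ hδ₂, fun s t hs ht hst => ?_⟩
    have h1 := hδ₁' s t hs ht (lt_of_lt_of_le hst (min_le_left _ _))
    have h2 := hδ₂' s t hs ht (lt_of_lt_of_le hst (min_le_right _ _))
    have heq : c • (u t y - u s y) =
        (u t (x₁ + c • y) - u s (x₁ + c • y)) - (u t x₁ - u s x₁) := by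
      simp only [map_add, map_smul, smul_sub]; abel
    have hbound : c * ‖u t y - u s y‖ < ε * c := by
      calc c * ‖u t y - u s y‖ = ‖c • (u t y - u s y)‖ := by
            rw [norm_smul, Real.norm_eq_abs, abs_of_pos hcpos]
        _ = ‖(u t (x₁ + c • y) - u s (x₁ + c • y)) - (u t x₁ - u s x₁)‖ := by rw [heq]
        _ ≤ ‖u t (x₁ + c • y) - u s (x₁ + c • y)‖ + ‖u t x₁ - u s x₁‖ := norm_sub_le _ _
        _ < ε * c / 2 + ε * c / 2 := by linarith
        _ = ε * c := by ring
    have := (mul_lt_mul_iff_right₀ hcpos).mp (by linarith [hbound] : c * ‖u t y - u s y‖ < c * ε)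
    exact this
end

section
/- Let X, Y be Banach spaces and u : [0,∞) → L(X;Y). If for every x ∈ X there is t_x ≥ 0 such that the orbit t ↦ u(t)x has bounded variation on every compact subinterval of (t_x,∞), then there exists t₀ ≥ 0 such that every orbit is locally of bounded variation on (t₀,∞). -/
/-!
Baire category, twice. The sets `T n` of vectors whose orbits have bounded variation on every
compact interval in `(n, ∞)` cover `X`, so one of them is non-meagre. For a compact interval `s`,
the vectors whose orbit has bounded variation on `s` form a submodule containing `T n`. It is the
union of the sublevel sets `{x | Var_s (u · x) ≤ M}`, which are closed since the variation is lower
semicontinuous under pointwise convergence; so one of them has interior, and a submodule with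
nonempty interior is the whole space.
-/

open Set
open scoped ENNReal

section Baire

variable {X ι : Type*} [TopologicalSpace X] [Countable ι]

theorem exists_not_isMeagre_of_iUnion_eq_univ [BaireSpace X] [Nonempty X] {T : ι → Set X}
    (hT : ⋃ i, T i = univ) : ∃ i, ¬IsMeagre (T i) := by
  by_contra! h
  exact not_isMeagre_of_isOpen isOpen_univ univ_nonempty (hT ▸ isMeagre_iUnion h)

theorem exists_nonempty_interior_of_not_isMeagre {A : Set X} {C : ι → Set X}
    (hA : ¬IsMeagre A) (hC : ∀ i, IsClosed (C i)) (hAC : A ⊆ ⋃ i, C i) :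
    ∃ i, (interior (C i)).Nonempty := by
  by_contra! h
  exact hA ((isMeagre_iUnion fun i => ((hC i).isNowhereDense_iff.2 (h i)).isMeagre).mono hAC)

theorem LowerSemicontinuous.nonempty_interior_of_not_isMeagre {φ : X → ℝ≥0∞}
    (hφ : LowerSemicontinuous φ) (h : ¬IsMeagre {x | φ x ≠ ⊤}) :
    (interior {x | φ x ≠ ⊤}).Nonempty := by
  have hcover : {x | φ x ≠ ⊤} ⊆ ⋃ M : ℕ, φ ⁻¹' Iic (M : ℝ≥0∞) := fun x hx =>
    mem_iUnion.2 ((ENNReal.exists_nat_gt hx).imp fun _ hM => hM.le)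
  obtain ⟨M, hM⟩ := exists_nonempty_interior_of_not_isMeagre h
    (fun M : ℕ => hφ.isClosed_preimage M) hcover
  exact hM.mono (interior_mono fun x hx => ne_top_of_le_ne_top (ENNReal.natCast_ne_top M) hx)

end Baire

section Variation

variable {𝕜 α E : Type*} [LinearOrder α]

theorem eVariationOn_add_le [SeminormedAddCommGroup E] (f g : α → E) (s : Set α) :
    eVariationOn (f + g) s ≤ eVariationOn f s + eVariationOn g s := by
  refine iSup_le fun ⟨n, u, hu, us⟩ => ?_
  calc ∑ i ∈ Finset.range n, edist ((f + g) (u (i + 1))) ((f + g) (u i))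
      ≤ ∑ i ∈ Finset.range n,
          (edist (f (u (i + 1))) (f (u i)) + edist (g (u (i + 1))) (g (u i))) :=
        Finset.sum_le_sum fun i _ => edist_add_add_le _ _ _ _
    _ = (∑ i ∈ Finset.range n, edist (f (u (i + 1))) (f (u i)))
        + ∑ i ∈ Finset.range n, edist (g (u (i + 1))) (g (u i)) := Finset.sum_add_distrib
    _ ≤ eVariationOn f s + eVariationOn g s :=
        add_le_add (eVariationOn.sum_le hu us) (eVariationOn.sum_le hu us)

variable (𝕜 E) [NormedField 𝕜] [SeminormedAddCommGroup E] [NormedSpace 𝕜 E]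

def boundedVariationSubmodule (s : Set α) : Submodule 𝕜 (α → E) where
  carrier := {f | BoundedVariationOn f s}
  zero_mem' := by
    have : ((0 : α → E) '' s).Subsingleton :=
      subsingleton_singleton.anti (image_subset_iff.2 fun _ _ => rfl)
    simp [BoundedVariationOn, eVariationOn.constant_on this]
  add_mem' {f g} hf hg :=
    ne_top_of_le_ne_top (ENNReal.add_ne_top.2 ⟨hf, hg⟩) (eVariationOn_add_le f g s)
  smul_mem' c f hf := (lipschitzWith_smul c).comp_boundedVariationOn hf

end Variation

theorem lowerSemicontinuous_eVariationOn {X α E : Type*} [TopologicalSpace X] [LinearOrder α]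
    [PseudoEMetricSpace E] {F : X → α → E} (hF : ∀ t, Continuous fun x => F x t) (s : Set α) :
    LowerSemicontinuous fun x => eVariationOn (F x) s := fun x _ hv =>
  eVariationOn.lowerSemicontinuous_aux (fun t _ => (hF t).tendsto x) hv

theorem boundedVariationOn_apply_of_not_isMeagre
    {𝕜 X E α : Type*} [NontriviallyNormedField 𝕜] [AddCommGroup X] [TopologicalSpace X]
    [ContinuousAdd X] [Module 𝕜 X] [ContinuousSMul 𝕜 X] [SeminormedAddCommGroup E]
    [NormedSpace 𝕜 E] [LinearOrder α] (u : α → X →L[𝕜] E) {s : Set α}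
    (h : ¬IsMeagre {x | BoundedVariationOn (fun t => u t x) s}) (x : X) :
    BoundedVariationOn (fun t => u t x) s := by
  let S := (boundedVariationSubmodule 𝕜 E s).comap (LinearMap.pi fun t => (u t : X →ₗ[𝕜] E))
  have hφ := lowerSemicontinuous_eVariationOn (F := fun x t => u t x) (fun t => (u t).continuous) s
  have hS : S = ⊤ := S.eq_top_of_nonempty_interior' (hφ.nonempty_interior_of_not_isMeagre h)
  exact Submodule.eq_top_iff'.1 hS x

theorem eventually_locally_bounded_variation_individual_implies_uniform_general
    {X Y : Type*} [NormedAddCommGroup X] [NormedSpace ℝ X] [CompleteSpace X]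
    [NormedAddCommGroup Y] [NormedSpace ℝ Y]
    (u : ℝ → X →L[ℝ] Y)
    (h : ∀ x : X, ∃ tx : ℝ, 0 ≤ tx ∧ ∀ a b : ℝ, tx < a → a ≤ b →
      BoundedVariationOn (fun t : ℝ => u t x) (Set.Icc a b)) :
    ∃ t₀ : ℝ, 0 ≤ t₀ ∧ ∀ x : X, ∀ a b : ℝ, t₀ < a → a ≤ b →
      BoundedVariationOn (fun t : ℝ => u t x) (Set.Icc a b) := by
  let T : ℕ → Set X := fun n =>
    {x | ∀ a b : ℝ, n < a → a ≤ b → BoundedVariationOn (fun t => u t x) (Icc a b)}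
  have hcover : ⋃ n, T n = univ := iUnion_eq_univ_iff.2 fun x => by
    obtain ⟨tx, -, htx⟩ := h x
    obtain ⟨n, hn⟩ := exists_nat_ge tx
    exact ⟨n, fun a b ha hab => htx a b (hn.trans_lt ha) hab⟩
  obtain ⟨n, hn⟩ := exists_not_isMeagre_of_iUnion_eq_univ hcover
  refine ⟨n, n.cast_nonneg, fun x a b ha hab => ?_⟩
  exact boundedVariationOn_apply_of_not_isMeagre u
    (fun hmeagre => hn (hmeagre.mono fun y hy => hy a b ha hab)) x

/-- Individually eventually locally of bounded variation implies uniformly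
eventually locally of bounded variation. -/
theorem eventually_locally_bounded_variation_individual_implies_uniform
    {X Y : Type*} [NormedAddCommGroup X] [NormedSpace ℝ X] [CompleteSpace X]
    [NormedAddCommGroup Y] [NormedSpace ℝ Y] [CompleteSpace Y]
    (u : ℝ → X →L[ℝ] Y)
    (h : ∀ x : X, ∃ tx : ℝ, 0 ≤ tx ∧ ∀ a b : ℝ, tx < a → a ≤ b →
      BoundedVariationOn (fun t : ℝ => u t x) (Set.Icc a b)) :
    ∃ t₀ : ℝ, 0 ≤ t₀ ∧ ∀ x : X, ∀ a b : ℝ, t₀ < a → a ≤ b →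
      BoundedVariationOn (fun t : ℝ => u t x) (Set.Icc a b) :=
  eventually_locally_bounded_variation_individual_implies_uniform_general u h
end

section
/- Let X, Y be Banach spaces and u : [0,∞) → L(X;Y). If for every x ∈ X there exists t_x ≥ 0 such that the orbit t ↦ u(t)x is absolutely continuous on (t_x,∞), then there exists t₀ ≥ 0 such that every orbit is absolutely continuous on (t₀,∞). -/
/-- `f` is absolutely continuous on the open half line `(a, ∞)`: for every `ε > 0`
there is `δ > 0` such that for every finite collection of pairwise disjoint
subintervals `(aₖ, bₖ)` of `(a, ∞)` of total length `< δ`, the sum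
`Σ ‖f bₖ - f aₖ‖` is `< ε`. -/
def AbsolutelyContinuousOnIoi {Y : Type*} [NormedAddCommGroup Y]
    (f : ℝ → Y) (t : ℝ) : Prop :=
  ∀ ε > (0:ℝ), ∃ δ > (0:ℝ), ∀ (n : ℕ) (a b : Fin n → ℝ),
    (∀ k, t < a k ∧ a k < b k) →
    (∀ i j, i ≠ j → Disjoint (Set.Ioo (a i) (b i)) (Set.Ioo (a j) (b j))) →
    (∑ k, (b k - a k)) < δ →
    (∑ k, ‖f (b k) - f (a k)‖) < ε

/-!
By Baire's theorem applied to the closed sets `{x | Σ ‖u bₖ x - u aₖ x‖ ≤ 1}` for all disjoint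
families `(aₖ, bₖ)` in `(N, ∞)` of total length `< 1 / (j + 1)`, there are `N`, `δ`, `C` with
`Σ ‖u bₖ x - u aₖ x‖ ≤ C ‖x‖` for every such family of total length `< δ`. By this uniform bound
the subspace of those `x` whose orbit is absolutely continuous on `(t, ∞)` is closed once `t ≥ N`.
These subspaces, `t = N + m`, cover `X`, so by Baire again one has nonempty interior, and a
subspace with nonempty interior is the whole space.
-/

open Set

def SmallIntervalFamily (t δ : ℝ) {n : ℕ} (a b : Fin n → ℝ) : Prop :=
  (∀ k, t < a k ∧ a k < b k) ∧
    (∀ i j, i ≠ j → Disjoint (Ioo (a i) (b i)) (Ioo (a j) (b j))) ∧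
    ∑ k, (b k - a k) < δ

def familyVariation {Y : Type*} [NormedAddCommGroup Y] (f : ℝ → Y) {n : ℕ}
    (a b : Fin n → ℝ) : ℝ :=
  ∑ k, ‖f (b k) - f (a k)‖

theorem SmallIntervalFamily.mono {t t' δ δ' : ℝ} {n : ℕ} {a b : Fin n → ℝ}
    (h : SmallIntervalFamily t δ a b) (ht : t' ≤ t) (hδ : δ ≤ δ') :
    SmallIntervalFamily t' δ' a b :=
  ⟨fun k => ⟨ht.trans_lt (h.1 k).1, (h.1 k).2⟩, h.2.1, h.2.2.trans_le hδ⟩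

section Variation

variable {Y : Type*} [NormedAddCommGroup Y] {n : ℕ} (a b : Fin n → ℝ)

theorem familyVariation_add_le (f g : ℝ → Y) :
    familyVariation (fun s => f s + g s) a b ≤ familyVariation f a b + familyVariation g a b := by
  rw [familyVariation, familyVariation, familyVariation, ← Finset.sum_add_distrib]
  refine Finset.sum_le_sum fun k _ => ?_
  simpa only [add_sub_add_comm] using norm_add_le _ _

theorem familyVariation_const_smul [NormedSpace ℝ Y] (c : ℝ) (f : ℝ → Y) :
    familyVariation (fun s => c • f s) a b = ‖c‖ * familyVariation f a b := by
  simp only [familyVariation, Finset.mul_sum, ← smul_sub, norm_smul]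

end Variation

theorem absolutelyContinuousOnIoi_iff {Y : Type*} [NormedAddCommGroup Y] (f : ℝ → Y) (t : ℝ) :
    AbsolutelyContinuousOnIoi f t ↔ ∀ ε > 0, ∃ δ > 0, ∀ (n : ℕ) (a b : Fin n → ℝ),
      SmallIntervalFamily t δ a b → familyVariation f a b < ε := by
  simp only [AbsolutelyContinuousOnIoi, SmallIntervalFamily, familyVariation, and_imp]

section AbsolutelyContinuous

variable {Y : Type*} [NormedAddCommGroup Y] {f g : ℝ → Y} {s t : ℝ}

theorem absolutelyContinuousOnIoi_const (c : Y) (t : ℝ) :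
    AbsolutelyContinuousOnIoi (fun _ => c) t :=
  (absolutelyContinuousOnIoi_iff _ _).2 fun ε hε =>
    ⟨1, one_pos, fun _ _ _ _ => by simpa [familyVariation] using hε⟩

theorem AbsolutelyContinuousOnIoi.mono (hf : AbsolutelyContinuousOnIoi f t) (hts : t ≤ s) :
    AbsolutelyContinuousOnIoi f s := by
  rw [absolutelyContinuousOnIoi_iff] at hf ⊢
  intro ε hε
  obtain ⟨δ, hδ, H⟩ := hf ε hε
  exact ⟨δ, hδ, fun n a b hab => H n a b (hab.mono hts le_rfl)⟩

theorem AbsolutelyContinuousOnIoi.add (hf : AbsolutelyContinuousOnIoi f t)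
    (hg : AbsolutelyContinuousOnIoi g t) : AbsolutelyContinuousOnIoi (fun s => f s + g s) t := by
  rw [absolutelyContinuousOnIoi_iff] at hf hg ⊢
  intro ε hε
  obtain ⟨δf, hδf, Hf⟩ := hf (ε / 2) (half_pos hε)
  obtain ⟨δg, hδg, Hg⟩ := hg (ε / 2) (half_pos hε)
  refine ⟨min δf δg, lt_min hδf hδg, fun n a b hab => ?_⟩
  calc familyVariation (fun s => f s + g s) a b ≤ familyVariation f a b + familyVariation g a b :=
        familyVariation_add_le a b f g
    _ < ε / 2 + ε / 2 := add_lt_add (Hf n a b (hab.mono le_rfl (min_le_left _ _)))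
        (Hg n a b (hab.mono le_rfl (min_le_right _ _)))
    _ = ε := add_halves ε

theorem AbsolutelyContinuousOnIoi.const_smul [NormedSpace ℝ Y]
    (hf : AbsolutelyContinuousOnIoi f t) (c : ℝ) :
    AbsolutelyContinuousOnIoi (fun s => c • f s) t := by
  rw [absolutelyContinuousOnIoi_iff] at hf ⊢
  intro ε hε
  obtain ⟨δ, hδ, H⟩ := hf (ε / (‖c‖ + 1)) (by positivity)
  refine ⟨δ, hδ, fun n a b hab => ?_⟩
  have hc : ‖c‖ * (ε / (‖c‖ + 1)) < ε := by
    rw [mul_div_assoc', div_lt_iff₀ (by positivity)]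
    linarith
  calc familyVariation (fun s => c • f s) a b = ‖c‖ * familyVariation f a b :=
        familyVariation_const_smul a b c f
    _ ≤ ‖c‖ * (ε / (‖c‖ + 1)) := mul_le_mul_of_nonneg_left (H n a b hab).le (norm_nonneg c)
    _ < ε := hc

end AbsolutelyContinuous

theorem Seminorm.le_mul_norm_of_forall_mem_ball {E : Type*} [NormedAddCommGroup E]
    [NormedSpace ℝ E] (p : Seminorm ℝ E) {x₀ : E} {r M : ℝ} (hr : 0 < r)
    (hp : ∀ y ∈ Metric.ball x₀ r, p y ≤ M) (y : E) : p y ≤ 4 * M / r * ‖y‖ := by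
  rcases eq_or_ne y 0 with rfl | hy
  · simp
  have hny : 0 < ‖y‖ := norm_pos_iff.2 hy
  set c := r / (2 * ‖y‖) with hc_def
  have hc : 0 < c := by positivity
  have hcy : ‖c • y‖ < r := by
    rw [norm_smul, Real.norm_of_nonneg hc.le, hc_def, div_mul_eq_mul_div,
      div_lt_iff₀ (by positivity)]
    nlinarith
  have hmem : x₀ + c • y ∈ Metric.ball x₀ r := by simpa [dist_eq_norm] using hcy
  have hscaled : c * p y ≤ 2 * M := by
    calc c * p y = p (x₀ + c • y - x₀) := by
          rw [add_sub_cancel_left, map_smul_eq_mul, Real.norm_of_nonneg hc.le]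
      _ ≤ p (x₀ + c • y) + p x₀ := map_sub_le_add p _ _
      _ ≤ M + M := add_le_add (hp _ hmem) (hp _ (Metric.mem_ball_self hr))
      _ = 2 * M := by ring
  rw [← le_div_iff₀' hc] at hscaled
  calc p y ≤ 2 * M / c := hscaled
    _ = 4 * M / r * ‖y‖ := by rw [hc_def]; field_simp; ring

section Orbit

variable {X Y : Type*} [NormedAddCommGroup X] [NormedSpace ℝ X]
  [NormedAddCommGroup Y] [NormedSpace ℝ Y] (u : ℝ → X →L[ℝ] Y)

def orbitACSubmodule (t : ℝ) : Submodule ℝ X where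
  carrier := {x | AbsolutelyContinuousOnIoi (fun s => u s x) t}
  zero_mem' := by
    simpa only [Set.mem_ofPred_eq, map_zero] using absolutelyContinuousOnIoi_const (0 : Y) t
  add_mem' {x y} hx hy := by
    simp only [Set.mem_ofPred_eq, map_add] at hx hy ⊢
    exact hx.add hy
  smul_mem' c x hx := by
    simp only [Set.mem_ofPred_eq, map_smul] at hx ⊢
    exact hx.const_smul c

@[simp]
theorem mem_orbitACSubmodule {t : ℝ} {x : X} :
    x ∈ orbitACSubmodule u t ↔ AbsolutelyContinuousOnIoi (fun s => u s x) t :=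
  Iff.rfl

def orbitVariation {n : ℕ} (a b : Fin n → ℝ) : Seminorm ℝ X :=
  Seminorm.of (fun x => familyVariation (fun s => u s x) a b)
    (fun x y => by
      simpa only [map_add] using familyVariation_add_le a b (fun s => u s x) (fun s => u s y))
    (fun c x => by
      simpa only [map_smul] using familyVariation_const_smul a b c (fun s => u s x))

theorem continuous_orbitVariation {n : ℕ} (a b : Fin n → ℝ) :
    Continuous (orbitVariation u a b) := by
  show Continuous fun x => ∑ k, ‖u (b k) x - u (a k) x‖
  fun_prop

theorem orbitVariation_apply {n : ℕ} (a b : Fin n → ℝ) (x : X) :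
    orbitVariation u a b x = familyVariation (fun s => u s x) a b :=
  rfl

theorem exists_orbitVariation_le_mul_norm [CompleteSpace X]
    (h : ∀ x, ∃ tx, AbsolutelyContinuousOnIoi (fun s => u s x) tx) :
    ∃ (N : ℕ) (δ C : ℝ), 0 < δ ∧ ∀ x (n : ℕ) (a b : Fin n → ℝ),
      SmallIntervalFamily N δ a b → orbitVariation u a b x ≤ C * ‖x‖ := by
  let A : ℕ × ℕ → Set X := fun p => {x | ∀ (n : ℕ) (a b : Fin n → ℝ),
    SmallIntervalFamily p.1 (1 / (p.2 + 1)) a b → orbitVariation u a b x ≤ 1}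
  have hclosed : ∀ p, IsClosed (A p) := fun p => by
    simp only [A, Set.ofPred_forall]
    exact isClosed_iInter fun n => isClosed_iInter fun a => isClosed_iInter fun b =>
      isClosed_iInter fun _ => isClosed_le (continuous_orbitVariation u a b) continuous_const
  have hcover : ⋃ p, A p = univ := by
    refine eq_univ_of_forall fun x => mem_iUnion.2 ?_
    obtain ⟨tx, hx⟩ := h x
    obtain ⟨δ, hδ, H⟩ := (absolutelyContinuousOnIoi_iff _ _).1 hx 1 one_pos
    obtain ⟨j, hj⟩ := exists_nat_one_div_lt hδ
    exact ⟨(⌈tx⌉₊, j), fun n a b hab => (H n a b (hab.mono (Nat.le_ceil tx) hj.le)).le⟩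
  obtain ⟨p, x₀, hx₀⟩ := nonempty_interior_of_iUnion_of_closed hclosed hcover
  obtain ⟨r, hr, hball⟩ := Metric.isOpen_iff.1 isOpen_interior x₀ hx₀
  exact ⟨p.1, 1 / (p.2 + 1), _, by positivity, fun x n a b hab =>
    (orbitVariation u a b).le_mul_norm_of_forall_mem_ball hr
      (fun y hy => interior_subset (hball hy) n a b hab) x⟩

theorem isClosed_orbitACSubmodule {s t δ C : ℝ} (hst : s ≤ t) (hδ : 0 < δ)
    (hC : ∀ x (n : ℕ) (a b : Fin n → ℝ),
      SmallIntervalFamily s δ a b → orbitVariation u a b x ≤ C * ‖x‖) :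
    IsClosed (orbitACSubmodule u t : Set X) := by
  refine isClosed_of_closure_subset fun x hx => ?_
  rw [SetLike.mem_coe, mem_orbitACSubmodule, absolutelyContinuousOnIoi_iff]
  intro ε hε
  obtain ⟨z, hz, hxz⟩ := Metric.mem_closure_iff.1 hx (ε / (2 * (|C| + 1))) (by positivity)
  rw [SetLike.mem_coe, mem_orbitACSubmodule, absolutelyContinuousOnIoi_iff] at hz
  obtain ⟨δz, hδz, Hz⟩ := hz (ε / 2) (half_pos hε)
  refine ⟨min δ δz, lt_min hδ hδz, fun n a b hab => ?_⟩
  have hdiff : orbitVariation u a b (x - z) ≤ ε / 2 := by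
    rw [dist_eq_norm, lt_div_iff₀ (by positivity)] at hxz
    calc orbitVariation u a b (x - z) ≤ C * ‖x - z‖ :=
          hC _ n a b (hab.mono hst (min_le_left _ _))
      _ ≤ |C| * ‖x - z‖ := mul_le_mul_of_nonneg_right (le_abs_self C) (norm_nonneg _)
      _ ≤ ε / 2 := by nlinarith [norm_nonneg (x - z), abs_nonneg C]
  calc orbitVariation u a b x ≤ orbitVariation u a b z + orbitVariation u a b (x - z) := by
        simpa only [add_sub_cancel] using map_add_le_add (orbitVariation u a b) z (x - z)
    _ < ε / 2 + ε / 2 := by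
        rw [orbitVariation_apply]
        exact add_lt_add_of_lt_of_le (Hz n a b (hab.mono le_rfl (min_le_right _ _))) hdiff
    _ = ε := add_halves ε

end Orbit

theorem eventually_absolutely_continuous_individual_implies_uniform_general
    {X Y : Type*} [NormedAddCommGroup X] [NormedSpace ℝ X] [CompleteSpace X]
    [NormedAddCommGroup Y] [NormedSpace ℝ Y]
    (u : ℝ → X →L[ℝ] Y)
    (h : ∀ x : X, ∃ tx : ℝ, 0 ≤ tx ∧
      AbsolutelyContinuousOnIoi (fun t : ℝ => u t x) tx) :
    ∃ t₀ : ℝ, 0 ≤ t₀ ∧ ∀ x : X,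
      AbsolutelyContinuousOnIoi (fun t : ℝ => u t x) t₀ := by
  obtain ⟨N, δ, C, hδ, hC⟩ :=
    exists_orbitVariation_le_mul_norm u fun x => (h x).imp fun _ => And.right
  have hclosed : ∀ m : ℕ, IsClosed (orbitACSubmodule u (N + m) : Set X) := fun m =>
    isClosed_orbitACSubmodule u (le_add_of_nonneg_right m.cast_nonneg) hδ hC
  have hcover : ⋃ m : ℕ, (orbitACSubmodule u (N + m) : Set X) = univ := by
    refine eq_univ_of_forall fun x => mem_iUnion.2 ?_
    obtain ⟨tx, -, hx⟩ := h x
    exact ⟨⌈tx⌉₊, hx.mono ((Nat.le_ceil tx).trans (le_add_of_nonneg_left N.cast_nonneg))⟩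
  obtain ⟨m, hm⟩ := nonempty_interior_of_iUnion_of_closed hclosed hcover
  refine ⟨N + m, by positivity, fun x => ?_⟩
  have htop := (orbitACSubmodule u (N + m)).eq_top_of_nonempty_interior' hm
  rw [← mem_orbitACSubmodule, htop]
  exact Submodule.mem_top

/-- Individually eventually absolutely continuous implies uniformly eventually
absolutely continuous. -/
theorem eventually_absolutely_continuous_individual_implies_uniform
    {X Y : Type*} [NormedAddCommGroup X] [NormedSpace ℝ X] [CompleteSpace X]
    [NormedAddCommGroup Y] [NormedSpace ℝ Y] [CompleteSpace Y]
    (u : ℝ → X →L[ℝ] Y)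
    (h : ∀ x : X, ∃ tx : ℝ, 0 ≤ tx ∧
      AbsolutelyContinuousOnIoi (fun t : ℝ => u t x) tx) :
    ∃ t₀ : ℝ, 0 ≤ t₀ ∧ ∀ x : X,
      AbsolutelyContinuousOnIoi (fun t : ℝ => u t x) t₀ :=
  eventually_absolutely_continuous_individual_implies_uniform_general u h
end
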